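/- Let G be a torsion-free abelian group, φ : G → G an endomorphism, and H a φ-invariant essential subgroup of G (i.e. H meets every nonzero subgroup of G nontrivially; equivalently, for every x ∈ G \ {0} there is k ∈ ℤ with kx ∈ H \ {0}). Then: (a) h(φ) = h(φ↾_H); (b) if h(φ) < ∞, then the endomorphism φ̄ : G/H → G/H induced by φ satisfies h(φ̄) = 0. -/

import Mathlib

open Pointwise

/-- The `n`-th φ-trajectory `T_n(φ,F) = F + φ(F) + ⋯ + φ^{n-1}(F)` of a finite subset `F`. -/
noncomputable def traj {G : Type*} [AddCommGroup G] (φ : AddMonoid.End G) (F : Finset G)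
    (n : ℕ) : Finset G :=
  letI := Classical.decEq G
  ∑ k ∈ Finset.range n, F.image (φ ^ k)

/-- The algebraic entropy of `φ` with respect to `F`:
`H(φ,F) = lim_n log|T_n(φ,F)|/n = inf_{n ≥ 1} log|T_n(φ,F)|/n`. -/
noncomputable def entWith {G : Type*} [AddCommGroup G] (φ : AddMonoid.End G) (F : Finset G) : ℝ :=
  ⨅ n : ℕ, Real.log ((traj φ F (n + 1)).card) / (n + 1)

/-- The algebraic entropy `h(φ) = sup { H(φ,F) : F nonempty finite }`, valued in `[0,∞]`. -/
noncomputable def algEnt {G : Type*} [AddCommGroup G] (φ : AddMonoid.End G) : ENNReal :=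
  ⨆ (F : Finset G) (_ : F.Nonempty), ENNReal.ofReal (entWith φ F)

/-- Restriction of an endomorphism to an invariant subgroup. -/
def restrictEnd {G : Type*} [AddCommGroup G] (φ : AddMonoid.End G) (H : AddSubgroup G)
    (h : ∀ x ∈ H, φ x ∈ H) : AddMonoid.End H :=
  AddMonoidHom.codRestrict ((φ : G →+ G).comp H.subtype) H (fun x => h x x.2)

/-- The endomorphism induced on the quotient by an invariant subgroup. -/
def quotEnd {G : Type*} [AddCommGroup G] (φ : AddMonoid.End G) (H : AddSubgroup G)
    (h : ∀ x ∈ H, φ x ∈ H) : AddMonoid.End (G ⧸ H) :=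
  QuotientAddGroup.map H H (φ : G →+ G) h

section Aux

variable {G : Type*} [AddCommGroup G] {G' : Type*} [AddCommGroup G']

lemma traj_zero (φ : AddMonoid.End G) (F : Finset G) : traj φ F 0 = 0 := by
  simp [traj]

lemma traj_succ (φ : AddMonoid.End G) (F : Finset G) (n : ℕ) :
    letI := Classical.decEq G
    traj φ F (n+1) = traj φ F n + F.image (φ ^ n) := by
  simp [traj, Finset.sum_range_succ]

lemma traj_nonempty (φ : AddMonoid.End G) {F : Finset G} (hF : F.Nonempty) (n : ℕ) :
    (traj φ F n).Nonempty := by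
  induction n with
  | zero => rw [traj_zero]; exact ⟨0, by simp [Finset.mem_zero]⟩
  | succ n ih =>
    rw [traj_succ]
    classical
    exact ih.add (hF.image _)

lemma traj_mono (φ : AddMonoid.End G) {A B : Finset G} (h : A ⊆ B) (n : ℕ) :
    traj φ A n ⊆ traj φ B n := by
  induction n with
  | zero => simp [traj_zero]
  | succ n ih =>
    rw [traj_succ, traj_succ]
    classical
    exact Finset.add_subset_add ih (Finset.image_subset_image h)

lemma one_le_card_traj (φ : AddMonoid.End G) {F : Finset G} (hF : F.Nonempty) (n : ℕ) :
    1 ≤ (traj φ F n).card :=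
  Finset.Nonempty.card_pos (traj_nonempty φ hF n)

lemma endPow_comm (φ : AddMonoid.End G) (φ' : AddMonoid.End G') (ψ : G →+ G')
    (hcomm : ∀ x, ψ (φ x) = φ' (ψ x)) (k : ℕ) (x : G) :
    ψ ((φ ^ k) x) = (φ' ^ k) (ψ x) := by
  induction k generalizing x with
  | zero => simp
  | succ k ih =>
    rw [pow_succ, pow_succ]
    simp only [AddMonoid.End.coe_mul, Function.comp_apply]
    rw [ih, hcomm]

lemma traj_image (φ : AddMonoid.End G) (φ' : AddMonoid.End G') (ψ : G →+ G')
    (hcomm : ∀ x, ψ (φ x) = φ' (ψ x)) (F : Finset G) (n : ℕ) :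
    letI := Classical.decEq G
    letI := Classical.decEq G'
    (traj φ F n).image ψ = traj φ' (F.image ψ) n := by
  classical
  induction n with
  | zero =>
    simp only [traj, Finset.range_zero, Finset.sum_empty]
    ext x
    simp [Finset.mem_zero]
  | succ n ih =>
    rw [traj_succ, traj_succ, Finset.image_add, ih, Finset.image_image, Finset.image_image]
    congr 1
    exact Finset.image_congr fun x _ => endPow_comm φ φ' ψ hcomm n x

lemma traj_add (φ : AddMonoid.End G) (A B : Finset G) (n : ℕ) :
    letI := Classical.decEq G
    traj φ (A + B) n = traj φ A n + traj φ B n := by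
  classical
  induction n with
  | zero =>
    simp only [traj, Finset.range_zero, Finset.sum_empty]
    ext x; simp [Finset.mem_zero, Finset.mem_add]
  | succ n ih =>
    rw [traj_succ, traj_succ, traj_succ, ih, Finset.image_add]
    exact add_add_add_comm _ _ _ _

lemma card_traj_image (φ : AddMonoid.End G) (φ' : AddMonoid.End G') (ψ : G →+ G')
    (hψ : Function.Injective ψ) (hcomm : ∀ x, ψ (φ x) = φ' (ψ x)) (F : Finset G) (n : ℕ) :
    letI := Classical.decEq G'
    (traj φ' (F.image ψ) n).card = (traj φ F n).card := by
  letI := Classical.decEq G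
  letI := Classical.decEq G'
  rw [← traj_image φ φ' ψ hcomm]
  exact Finset.card_image_of_injective _ hψ

lemma entWith_bddBelow (φ : AddMonoid.End G) {F : Finset G} (hF : F.Nonempty) :
    BddBelow (Set.range fun n : ℕ => Real.log ((traj φ F (n + 1)).card) / (n + 1)) := by
  refine ⟨0, ?_⟩
  rintro x ⟨n, rfl⟩
  have h1 : (1:ℝ) ≤ ((traj φ F (n+1)).card : ℝ) := by
    exact_mod_cast one_le_card_traj φ hF (n+1)
  have := Real.log_nonneg h1
  positivity

lemma entWith_nonneg (φ : AddMonoid.End G) {F : Finset G} (hF : F.Nonempty) :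
    0 ≤ entWith φ F := by
  refine le_ciInf fun n => ?_
  have h1 : (1:ℝ) ≤ ((traj φ F (n+1)).card : ℝ) := by
    exact_mod_cast one_le_card_traj φ hF (n+1)
  have := Real.log_nonneg h1
  positivity

lemma entWith_le (φ : AddMonoid.End G) {F : Finset G} (hF : F.Nonempty) (n : ℕ) :
    entWith φ F ≤ Real.log ((traj φ F (n + 1)).card) / (n + 1) :=
  ciInf_le (entWith_bddBelow φ hF) n

lemma entWith_mono (φ : AddMonoid.End G) {A B : Finset G} (hA : A.Nonempty) (h : A ⊆ B) :
    entWith φ A ≤ entWith φ B := by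
  refine le_ciInf fun n => (entWith_le φ hA n).trans ?_
  have hc : (0:ℝ) < ((traj φ A (n+1)).card : ℝ) := by
    exact_mod_cast one_le_card_traj φ hA (n+1)
  have hle : ((traj φ A (n+1)).card : ℝ) ≤ ((traj φ B (n+1)).card : ℝ) := by
    exact_mod_cast Finset.card_le_card (traj_mono φ h (n+1))
  have hlog := Real.log_le_log hc hle
  have hn : (0:ℝ) ≤ (n:ℝ) + 1 := by positivity
  exact div_le_div_of_nonneg_right hlog hn

lemma entWith_eq_of_card_eq (φ : AddMonoid.End G) (φ' : AddMonoid.End G')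
    {F : Finset G} {F' : Finset G'}
    (h : ∀ n, (traj φ F n).card = (traj φ' F' n).card) :
    entWith φ F = entWith φ' F' := by
  unfold entWith
  congr 1
  funext n
  rw [h]

lemma le_algEnt (φ : AddMonoid.End G) {F : Finset G} (hF : F.Nonempty) :
    ENNReal.ofReal (entWith φ F) ≤ algEnt φ :=
  le_iSup₂ (f := fun (F : Finset G) (_ : F.Nonempty) => ENNReal.ofReal (entWith φ F)) F hF

lemma algEnt_le (φ : AddMonoid.End G) {x : ENNReal}
    (h : ∀ F : Finset G, F.Nonempty → ENNReal.ofReal (entWith φ F) ≤ x) :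
    algEnt φ ≤ x :=
  iSup₂_le h

lemma pow_mem_subgroup (φ : AddMonoid.End G) (H : AddSubgroup G) (hinv : ∀ x ∈ H, φ x ∈ H)
    (k : ℕ) {x : G} (hx : x ∈ H) : (φ ^ k) x ∈ H := by
  induction k generalizing x with
  | zero => simpa using hx
  | succ k ih =>
    rw [pow_succ]
    simp only [AddMonoid.End.coe_mul, Function.comp_apply]
    exact ih (hinv x hx)

lemma traj_mem_subgroup (φ : AddMonoid.End G) (H : AddSubgroup G) (hinv : ∀ x ∈ H, φ x ∈ H)
    {A : Finset G} (hA : ∀ x ∈ A, x ∈ H) (n : ℕ) :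
    ∀ t ∈ traj φ A n, t ∈ H := by
  classical
  induction n with
  | zero =>
    intro t ht
    rw [traj_zero, Finset.mem_zero] at ht
    rw [ht]; exact H.zero_mem
  | succ n ih =>
    intro t ht
    rw [traj_succ, Finset.mem_add] at ht
    obtain ⟨b, hb, c, hc, rfl⟩ := ht
    obtain ⟨a, ha, rfl⟩ := Finset.mem_image.mp hc
    exact H.add_mem (ih b hb) (pow_mem_subgroup φ H hinv n (hA a ha))

/-- The counting lemma: if `S ⊆ H` then `|π(T)| * |S| ≤ |T + S|`. -/
lemma card_image_mk_mul_card_le (H : AddSubgroup G) (T S : Finset G)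
    (hS : ∀ s ∈ S, s ∈ H) :
    letI := Classical.decEq G
    letI := Classical.decEq (G ⧸ H)
    (T.image (QuotientAddGroup.mk' H)).card * S.card ≤ (T + S).card := by
  classical
  letI := Classical.decEq G
  letI := Classical.decEq (G ⧸ H)
  set π := QuotientAddGroup.mk' H with hπ
  rw [← Finset.card_product]
  have hlift : ∀ q ∈ T.image π, ∃ t, t ∈ T ∧ π t = q := by
    intro q hq
    obtain ⟨t, ht, rfl⟩ := Finset.mem_image.mp hq
    exact ⟨t, ht, rfl⟩
  set r : G ⧸ H → G := fun q => if h : ∃ t, t ∈ T ∧ π t = q then h.choose else 0 with hr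
  have hrT : ∀ q ∈ T.image π, r q ∈ T ∧ π (r q) = q := by
    intro q hq
    have hex : ∃ t, t ∈ T ∧ π t = q := hlift q hq
    have := hex.choose_spec
    simp only [hr, dif_pos hex]
    exact this
  apply Finset.card_le_card_of_injOn (fun p => r p.1 + p.2)
  · rintro ⟨q, s⟩ hp
    rw [Finset.mem_coe, Finset.mem_product] at hp
    rw [Finset.mem_coe, Finset.mem_add]
    exact ⟨r q, (hrT q hp.1).1, s, hp.2, rfl⟩
  · rintro ⟨q, s⟩ hp ⟨q', s'⟩ hp' heq
    simp only [Finset.mem_coe, Finset.mem_product] at hp hp'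
    simp only at heq
    have hπs : π s = 0 := (QuotientAddGroup.eq_zero_iff s).mpr (hS s hp.2)
    have hπs' : π s' = 0 := (QuotientAddGroup.eq_zero_iff s').mpr (hS s' hp'.2)
    have h1 : q = q' := by
      have := congrArg π heq
      rw [map_add, map_add, hπs, hπs', add_zero, add_zero, (hrT q hp.1).2,
        (hrT q' hp'.1).2] at this
      exact this
    subst h1
    have h2 : s = s' := by
      have := heq
      exact add_left_cancel this
    simp [h2]

end Aux

section Main

variable {G : Type*} [AddCommGroup G]

/-- `x ↦ m • x` as an additive monoid hom. -/
def smulHom (G : Type*) [AddCommGroup G] (m : ℕ) : G →+ G :=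
  AddMonoidHom.mk' (fun x => m • x) (fun a b => smul_add m a b)

lemma smulHom_apply (m : ℕ) (x : G) : smulHom G m x = m • x := rfl

lemma smulHom_injective (htf : ∀ x : G, x ≠ 0 → ∀ n : ℕ, 0 < n → n • x ≠ 0)
    {m : ℕ} (hm : 0 < m) : Function.Injective (smulHom G m) := by
  intro x y hxy
  by_contra hne
  have hsub : x - y ≠ 0 := sub_ne_zero.mpr hne
  have : m • (x - y) = 0 := by
    rw [smul_sub]
    simpa [smulHom_apply, sub_eq_zero] using hxy
  exact htf (x - y) hsub m hm this

lemma smulHom_comm (φ : AddMonoid.End G) (m : ℕ) (x : G) :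
    smulHom G m (φ x) = φ (smulHom G m x) := by
  simp [smulHom_apply, map_nsmul]

end Main
/-- For a `φ`-invariant essential subgroup `H` of a torsion-free abelian group `G`:
(a) `h(φ) = h(φ↾_H)`; (b) if `h(φ) < ∞` then `h(φ̄) = 0` on `G/H`. -/
theorem stmt9 {G : Type*} [AddCommGroup G] (φ : AddMonoid.End G)
    (htf : ∀ x : G, x ≠ 0 → ∀ n : ℕ, 0 < n → n • x ≠ 0)
    (H : AddSubgroup G) (hinv : ∀ x ∈ H, φ x ∈ H)
    (hess : ∀ x : G, x ≠ 0 → ∃ k : ℤ, k • x ∈ H ∧ k • x ≠ 0) :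
    algEnt φ = algEnt (restrictEnd φ H hinv) ∧
    (algEnt φ ≠ ⊤ → algEnt (quotEnd φ H hinv) = 0) := by
  letI := Classical.decEq G
  letI := Classical.decEq (G ⧸ H)
  letI := Classical.decPred (fun x : G => x ∈ H)
  -- exponents annihilating into H
  have hd : ∀ x : G, ∃ d : ℕ, 0 < d ∧ d • x ∈ H := by
    intro x
    by_cases hx : x = 0
    · exact ⟨1, one_pos, by rw [hx, smul_zero]; exact H.zero_mem⟩
    · obtain ⟨k, hkH, hk0⟩ := hess x hx
      have hkne : k ≠ 0 := fun h => hk0 (by simp [h])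
      refine ⟨k.natAbs, Int.natAbs_pos.mpr hkne, ?_⟩
      have hcast : ((k.natAbs : ℤ)) • x = k.natAbs • x := natCast_zsmul x k.natAbs
      rcases Int.natAbs_eq k with h | h
      · rw [← hcast, ← h]; exact hkH
      · rw [← hcast]
        have : ((k.natAbs : ℤ)) • x = -(k • x) := by
          rw [← neg_zsmul]; congr 1; omega
        rw [this]; exact H.neg_mem hkH
  choose d hd0 hdH using hd
  -- entropy with a scaled set is unchanged
  have hscale : ∀ (m : ℕ), 0 < m → ∀ (F : Finset G) (n : ℕ),
      (traj φ (F.image (smulHom G m)) n).card = (traj φ F n).card := by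
    intro m hm F n
    exact card_traj_image φ φ (smulHom G m) (smulHom_injective htf hm)
      (smulHom_comm φ m) F n
  -- multiplier for a finite set
  have hmul : ∀ F : Finset G, ∃ m : ℕ, 0 < m ∧ ∀ x ∈ F, m • x ∈ H := by
    intro F
    refine ⟨∏ x ∈ F, d x, Finset.prod_pos fun x _ => hd0 x, ?_⟩
    intro x hx
    rw [← Finset.prod_erase_mul F d hx, mul_smul]
    exact nsmul_mem (hdH x) _
  constructor
  · apply le_antisymm
    · -- algEnt φ ≤ algEnt restrict
      apply algEnt_le
      intro F hF
      obtain ⟨m, hm, hmF⟩ := hmul F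
      set F1 : Finset G := F.image (smulHom G m) with hF1
      have hF1H : ∀ x ∈ F1, x ∈ H := by
        intro x hx
        obtain ⟨a, ha, rfl⟩ := Finset.mem_image.mp hx
        exact hmF a ha
      set F2 : Finset H := F1.subtype (· ∈ H) with hF2
      have hF2img : F2.image H.subtype = F1 := by
        ext x
        simp only [hF2, Finset.mem_image, Finset.mem_subtype, AddSubgroup.coe_subtype,
          Subtype.exists, exists_and_left, exists_prop, exists_eq_right_right]
        exact ⟨fun hx => hx.1, fun hx => ⟨hx, hF1H x hx⟩⟩
      have hF2ne : F2.Nonempty := by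
        obtain ⟨x, hx⟩ := hF.image (smulHom G m)
        exact ⟨⟨x, hF1H x hx⟩, by simp [hF2, hF1, Finset.mem_subtype, hx]⟩
      have hcard : ∀ n, (traj (restrictEnd φ H hinv) F2 n).card = (traj φ F n).card := by
        intro n
        have h1 : (traj φ (F2.image H.subtype) n).card
            = (traj (restrictEnd φ H hinv) F2 n).card :=
          card_traj_image (restrictEnd φ H hinv) φ H.subtype Subtype.coe_injective
            (fun x => rfl) F2 n
        rw [hF2img] at h1
        rw [← h1, hF1]
        exact hscale m hm F n
      have : entWith φ F = entWith (restrictEnd φ H hinv) F2 :=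
        entWith_eq_of_card_eq φ (restrictEnd φ H hinv) fun n => (hcard n).symm
      rw [this]
      exact le_algEnt _ hF2ne
    · -- algEnt restrict ≤ algEnt φ
      apply algEnt_le
      intro F' hF'
      have hcard : ∀ n, (traj (restrictEnd φ H hinv) F' n).card
          = (traj φ (F'.image H.subtype) n).card := fun n =>
        (card_traj_image (restrictEnd φ H hinv) φ H.subtype Subtype.coe_injective
          (fun x => rfl) F' n).symm
      have : entWith (restrictEnd φ H hinv) F' = entWith φ (F'.image H.subtype) :=
        entWith_eq_of_card_eq _ _ hcard
      rw [this]
      exact le_algEnt _ (hF'.image _)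
  · intro hfin
    set φq := quotEnd φ H hinv with hφq
    set c := (algEnt φ).toReal with hc
    have hc0 : 0 ≤ c := ENNReal.toReal_nonneg
    have hent_le_c : ∀ E : Finset G, E.Nonempty → entWith φ E ≤ c := by
      intro E hE
      have h1 : ENNReal.ofReal (entWith φ E) ≤ ENNReal.ofReal c := by
        rw [hc, ENNReal.ofReal_toReal hfin]
        exact le_algEnt φ hE
      exact (ENNReal.ofReal_le_ofReal_iff hc0).mp h1
    refine le_antisymm (algEnt_le _ ?_) zero_le
    intro Fq hFq
    set π : G →+ G ⧸ H := (QuotientAddGroup.mk' H : G →+ G ⧸ H) with hπdef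
    have hπcomm : ∀ x : G, π (φ x) = φq (π x) := fun x =>
      (QuotientAddGroup.map_mk' H H (φ : G →+ G) hinv x).symm
    -- lift of Fq
    set F : Finset G := insert 0 (Fq.image Quotient.out) with hFdef
    have hF0 : (0:G) ∈ F := Finset.mem_insert_self _ _
    have hFne : F.Nonempty := ⟨0, hF0⟩
    have hsub : Fq ⊆ F.image π := by
      intro q hq
      refine Finset.mem_image.mpr ⟨q.out, ?_, ?_⟩
      · exact Finset.mem_insert_of_mem (Finset.mem_image_of_mem _ hq)
      · exact Quotient.out_eq' q
    have hFqimg_ne : (F.image π).Nonempty := hFne.image _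
    obtain ⟨m, hm, hmF⟩ := hmul F
    set ψ : G →+ G := smulHom G m with hψdef
    have hψinj : Function.Injective ψ := smulHom_injective htf hm
    have hψcomm : ∀ x, ψ (φ x) = φ (ψ x) := smulHom_comm φ m
    -- iterated enlargement
    set f : Finset G → Finset G := fun A => A + A.image ψ with hfdef
    set E : ℕ → Finset G := fun j => f^[j] F with hEdef
    have hE0 : E 0 = F := rfl
    have hEsucc : ∀ j, E (j+1) = E j + (E j).image ψ := by
      intro j
      show f^[j+1] F = _
      rw [Function.iterate_succ_apply']
    have hzeroE : ∀ j, (0:G) ∈ E j := by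
      intro j
      induction j with
      | zero => exact hF0
      | succ j ih =>
        rw [hEsucc j, Finset.mem_add]
        exact ⟨0, ih, ψ 0, Finset.mem_image_of_mem _ ih, by simp⟩
    have hEne : ∀ j, (E j).Nonempty := fun j => ⟨0, hzeroE j⟩
    have hFE : ∀ j, F ⊆ E j := by
      intro j
      induction j with
      | zero => exact subset_of_eq hE0.symm
      | succ j ih =>
        refine ih.trans ?_
        intro x hx
        rw [hEsucc j, Finset.mem_add]
        exact ⟨x, hx, ψ 0, Finset.mem_image_of_mem _ (hzeroE j), by simp⟩
    have hEH : ∀ j, ∀ x ∈ E j, m • x ∈ H := by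
      intro j
      induction j with
      | zero => exact fun x hx => hmF x (hE0 ▸ hx)
      | succ j ih =>
        intro x hx
        rw [hEsucc j, Finset.mem_add] at hx
        obtain ⟨a, ha, b, hb, rfl⟩ := hx
        obtain ⟨b', hb', rfl⟩ := Finset.mem_image.mp hb
        rw [smul_add]
        refine H.add_mem (ih a ha) ?_
        have : ψ b' = m • b' := rfl
        rw [this, smul_comm]
        exact nsmul_mem (ih b' hb') m
    -- the key counting estimate
    have key : ∀ (j N : ℕ),
        ((traj φq (F.image π) N).card) ^ j ≤ (traj φ (E j) N).card := by
      intro j N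
      induction j with
      | zero =>
        rw [pow_zero]
        exact one_le_card_traj φ (hEne 0) N
      | succ j ih =>
        set T := traj φ (E j) N with hT
        -- trajectory in the quotient is the image of the trajectory
        have himg : traj φq (F.image π) N = (traj φ F N).image π :=
          (traj_image φ φq π hπcomm F N).symm
        have h1 : (traj φq (F.image π) N).card ≤ (T.image π).card := by
          rw [himg]
          exact Finset.card_le_card (Finset.image_subset_image (traj_mono φ (hFE j) N))
        -- image of T under ψ lands in H
        have hTψ : (T.image ψ) = traj φ ((E j).image ψ) N := traj_image φ φ ψ hψcomm _ N
        have hSH : ∀ s ∈ T.image ψ, s ∈ H := by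
          rw [hTψ]
          refine traj_mem_subgroup φ H hinv ?_ N
          intro x hx
          obtain ⟨a, ha, rfl⟩ := Finset.mem_image.mp hx
          exact hEH j a ha
        have h2 : (T.image π).card * (T.image ψ).card ≤ (T + T.image ψ).card :=
          card_image_mk_mul_card_le H T (T.image ψ) hSH
        have h3 : (T.image ψ).card = T.card := Finset.card_image_of_injective _ hψinj
        have h4 : T + T.image ψ = traj φ (E (j+1)) N := by
          rw [hEsucc j, traj_add, ← hTψ, hT]
        have h5 : (traj φq (F.image π) N).card ^ (j+1)
            ≤ (T.image π).card * T.card := by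
          rw [pow_succ, mul_comm]
          exact Nat.mul_le_mul h1 ih
        calc (traj φq (F.image π) N).card ^ (j+1)
            ≤ (T.image π).card * T.card := h5
          _ = (T.image π).card * (T.image ψ).card := by rw [h3]
          _ ≤ (T + T.image ψ).card := h2
          _ = (traj φ (E (j+1)) N).card := by rw [h4]
    -- entropy bound from the counting estimate
    have hcle : ∀ j : ℕ, 0 < j → entWith φq (F.image π) ≤ c / j := by
      intro j hj
      have hjR : (0:ℝ) < (j:ℝ) := by exact_mod_cast hj
      have h1 : (j:ℝ) * entWith φq (F.image π) ≤ entWith φ (E j) := by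
        refine le_ciInf fun n => ?_
        have h2 : (j:ℝ) * entWith φq (F.image π)
            ≤ (j:ℝ) * (Real.log ((traj φq (F.image π) (n+1)).card) / (n+1)) :=
          mul_le_mul_of_nonneg_left (entWith_le φq hFqimg_ne n) hjR.le
        refine h2.trans ?_
        have ha : (1:ℝ) ≤ ((traj φq (F.image π) (n+1)).card : ℝ) := by
          exact_mod_cast one_le_card_traj φq hFqimg_ne (n+1)
        have hapos : (0:ℝ) < ((traj φq (F.image π) (n+1)).card : ℝ) :=
          lt_of_lt_of_le one_pos ha
        have hlog : (j:ℝ) * Real.log ((traj φq (F.image π) (n+1)).card)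
            ≤ Real.log ((traj φ (E j) (n+1)).card) := by
          rw [← Real.log_pow]
          apply Real.log_le_log (pow_pos hapos j)
          exact_mod_cast key j (n+1)
        rw [← mul_div_assoc]
        have hn : (0:ℝ) ≤ (n:ℝ)+1 := by positivity
        exact div_le_div_of_nonneg_right hlog hn
      have h3 : entWith φ (E j) ≤ c := hent_le_c _ (hEne j)
      have h4 : (j:ℝ) * entWith φq (F.image π) ≤ c := h1.trans h3
      rw [le_div_iff₀ hjR, mul_comm]
      exact h4
    -- conclude: the entropy is ≤ 0
    have hfqle : entWith φq Fq ≤ entWith φq (F.image π) := entWith_mono φq hFq hsub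
    have hle0 : entWith φq Fq ≤ 0 := by
      by_contra hpos
      push_neg at hpos
      set e := entWith φq Fq with he
      set j : ℕ := ⌈c / e⌉₊ + 1 with hj
      have hjpos : 0 < j := Nat.succ_pos _
      have hjR : (0:ℝ) < (j:ℝ) := by exact_mod_cast hjpos
      have hlt : c / e < (j:ℝ) := by
        have := Nat.le_ceil (c / e)
        have h2 : ((⌈c / e⌉₊ : ℝ)) < (j:ℝ) := by exact_mod_cast Nat.lt_succ_self _
        linarith
      have hcj : c / (j:ℝ) < e := by
        rw [div_lt_iff₀ hjR]
        have := (div_lt_iff₀ hpos).mp hlt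
        linarith [mul_comm e (j:ℝ)]
      have : e ≤ c / (j:ℝ) := hfqle.trans (hcle j hjpos)
      linarith
    simpa [ENNReal.ofReal_eq_zero] using hle0
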